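/- arXiv:2310.15384 — 5 statements merged into one kernel-verified Lean document; each statement's English description precedes it below -/
import Mathlib

section
/- Suppose for each i ∈ [n] the function x ↦ ∇_i J_i(x) satisfies: |∇_i J_i(x_i, x_{-i}) − ∇_i J_i(y_i, x_{-i})| ≤ L_i |x_i − y_i| for all x_i, y_i ∈ Ω_i and all x_{-i}, and |∇_i J_i(x_i, x_{-i}) − ∇_i J_i(x_i, y_{-i})| ≤ L_{-i} ‖x_{-i} − y_{-i}‖ for all x_i ∈ Ω_i and all x_{-i}, y_{-i}. Define the pseudo-gradient estimation F: Ω_a → ℝ^{n×n} by F(X) being the diagonal matrix with i-th diagonal entry ∇_i J_i(X_i), where X_i is the i-th row of X. Then F is Lipschitz continuous on Ω_a in the Frobenius norm with constant L = max_{i∈[n]} √(L_i² + L_{-i}²). -/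
/-!
The `i`-th diagonal entry of `F X - F Y` is `g i (X i) - g i (Y i)`. Passing through the row
`X i` with its `i`-th coordinate replaced by `Y i i` bounds it by `Lᵢ |a| + L₋ᵢ √s`, with
`a = X i i - Y i i` and `s = ∑_{j ≠ i} (X i j - Y i j)²`, so `a² + s = ‖X i - Y i‖²`; Cauchy–Schwarz in `ℝ²` turns this into `√(Lᵢ² + L₋ᵢ²) ‖X i - Y i‖`,
and summing the squares over the rows gives the Frobenius bound.
-/

open Finset

def frobInner {n : ℕ} (A B : Matrix (Fin n) (Fin n) ℝ) : ℝ :=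
  ∑ i, ∑ j, A i j * B i j

noncomputable def frobNorm {n : ℕ} (A : Matrix (Fin n) (Fin n) ℝ) : ℝ :=
  Real.sqrt (frobInner A A)

lemma mul_add_mul_le_sqrt_mul_sqrt (a b c d : ℝ) :
    a * c + b * d ≤ √(a ^ 2 + b ^ 2) * √(c ^ 2 + d ^ 2) := by
  simpa [Fin.sum_univ_two] using Real.sum_mul_le_sqrt_mul_sqrt univ ![a, b] ![c, d]

section PartialLipschitz

variable {ι : Type*} [Fintype ι] [DecidableEq ι] {f : (ι → ℝ) → ℝ} {i : ι} {s : Set ℝ}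
  {K K' : ℝ}

lemma abs_sub_le_of_lipschitz_coord_of_lipschitz_rest
    (hcoord : ∀ x y : ι → ℝ, x i ∈ s → y i ∈ s → (∀ j, j ≠ i → x j = y j) →
      |f x - f y| ≤ K * |x i - y i|)
    (hrest : ∀ x y : ι → ℝ, x i ∈ s → x i = y i →
      |f x - f y| ≤ K' * √(∑ j ∈ univ.erase i, (x j - y j) ^ 2))
    {x y : ι → ℝ} (hx : x i ∈ s) (hy : y i ∈ s) :
    |f x - f y| ≤ K * |x i - y i| + K' * √(∑ j ∈ univ.erase i, (x j - y j) ^ 2) := by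
  set z := Function.update x i (y i) with hz
  have hzi : z i = y i := Function.update_self _ _ _
  have hcoord_xz : |f x - f z| ≤ K * |x i - y i| := by
    simpa only [hzi] using hcoord x z hx (hzi ▸ hy) fun j hj ↦ (Function.update_of_ne hj _ _).symm
  have hrest_zy : |f z - f y| ≤ K' * √(∑ j ∈ univ.erase i, (x j - y j) ^ 2) := by
    have hsum : ∑ j ∈ univ.erase i, (z j - y j) ^ 2 = ∑ j ∈ univ.erase i, (x j - y j) ^ 2 :=
      sum_congr rfl fun j hj ↦ by rw [hz, Function.update_of_ne (ne_of_mem_erase hj)]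
    simpa only [hsum] using hrest z y (hzi ▸ hy) hzi
  exact (abs_sub_le _ _ _).trans (add_le_add hcoord_xz hrest_zy)

lemma abs_sub_le_sqrt_mul_of_lipschitz_coord_of_lipschitz_rest
    (hcoord : ∀ x y : ι → ℝ, x i ∈ s → y i ∈ s → (∀ j, j ≠ i → x j = y j) →
      |f x - f y| ≤ K * |x i - y i|)
    (hrest : ∀ x y : ι → ℝ, x i ∈ s → x i = y i →
      |f x - f y| ≤ K' * √(∑ j ∈ univ.erase i, (x j - y j) ^ 2))
    {x y : ι → ℝ} (hx : x i ∈ s) (hy : y i ∈ s) :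
    |f x - f y| ≤ √(K ^ 2 + K' ^ 2) * √(∑ j, (x j - y j) ^ 2) := by
  have hr : 0 ≤ ∑ j ∈ univ.erase i, (x j - y j) ^ 2 := sum_nonneg fun _ _ ↦ sq_nonneg _
  calc |f x - f y| ≤ K * |x i - y i| + K' * √(∑ j ∈ univ.erase i, (x j - y j) ^ 2) :=
        abs_sub_le_of_lipschitz_coord_of_lipschitz_rest hcoord hrest hx hy
    _ ≤ √(K ^ 2 + K' ^ 2) * √(|x i - y i| ^ 2 + √(∑ j ∈ univ.erase i, (x j - y j) ^ 2) ^ 2) :=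
        mul_add_mul_le_sqrt_mul_sqrt _ _ _ _
    _ = √(K ^ 2 + K' ^ 2) * √(∑ j, (x j - y j) ^ 2) := by
        rw [sq_abs, Real.sq_sqrt hr, add_sum_erase _ (fun j ↦ (x j - y j) ^ 2) (mem_univ i)]

end PartialLipschitz

section Frobenius

variable {n : ℕ}

lemma frobNorm_eq_sqrt_sum_sq (A : Matrix (Fin n) (Fin n) ℝ) :
    frobNorm A = √(∑ i, ∑ j, A i j ^ 2) := by
  simp only [frobNorm, frobInner, sq]

lemma frobNorm_diagonal (d : Fin n → ℝ) :
    frobNorm (Matrix.diagonal d) = √(∑ i, d i ^ 2) := by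
  rw [frobNorm_eq_sqrt_sum_sq]
  congr 1
  refine sum_congr rfl fun i _ ↦ ?_
  rw [sum_eq_single i (fun j _ hj ↦ by simp [Matrix.diagonal_apply_ne _ hj.symm]) (by simp)]
  simp

lemma frobNorm_diagonal_sub_diagonal_le {d e : Fin n → ℝ} {X Y : Matrix (Fin n) (Fin n) ℝ}
    {L : ℝ} (hL : 0 ≤ L) (h : ∀ i, |d i - e i| ≤ L * √(∑ j, (X i j - Y i j) ^ 2)) :
    frobNorm (Matrix.diagonal d - Matrix.diagonal e) ≤ L * frobNorm (X - Y) := by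
  have hsq : ∀ i, (d i - e i) ^ 2 ≤ L ^ 2 * ∑ j, (X i j - Y i j) ^ 2 := fun i ↦ by
    simpa [mul_pow, Real.sq_sqrt (sum_nonneg fun _ _ ↦ sq_nonneg _)] using
      pow_le_pow_left₀ (abs_nonneg _) (h i) 2
  rw [Matrix.diagonal_sub, frobNorm_diagonal, frobNorm_eq_sqrt_sum_sq]
  calc √(∑ i, (d i - e i) ^ 2) ≤ √(L ^ 2 * ∑ i, ∑ j, (X i j - Y i j) ^ 2) := by
        rw [mul_sum]
        exact Real.sqrt_le_sqrt (sum_le_sum fun i _ ↦ hsq i)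
    _ = L * √(∑ i, ∑ j, (X - Y) i j ^ 2) := by
        rw [Real.sqrt_mul (sq_nonneg L), Real.sqrt_sq hL]
        rfl

end Frobenius

theorem stmt_2_general {n : ℕ} [NeZero n]
    (Ω : Fin n → Set ℝ)
    (g : Fin n → (Fin n → ℝ) → ℝ)
    (Li Lmi : Fin n → ℝ)
    (hlipOwn : ∀ i, ∀ x y : Fin n → ℝ, x i ∈ Ω i → y i ∈ Ω i →
      (∀ j, j ≠ i → x j = y j) → |g i x - g i y| ≤ Li i * |x i - y i|)
    (hlipOther : ∀ i, ∀ x y : Fin n → ℝ, x i ∈ Ω i → x i = y i →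
      |g i x - g i y| ≤ Lmi i * Real.sqrt (∑ j ∈ Finset.univ.erase i, (x j - y j) ^ 2)) :
    ∀ X Y : Matrix (Fin n) (Fin n) ℝ,
      (∀ i, X i i ∈ Ω i) → (∀ i, Y i i ∈ Ω i) →
      frobNorm (Matrix.diagonal (fun i => g i (X i)) -
          Matrix.diagonal (fun i => g i (Y i))) ≤
        (Finset.univ.sup' Finset.univ_nonempty fun i =>
            Real.sqrt (Li i ^ 2 + Lmi i ^ 2)) *
          frobNorm (X - Y) := by
  intro X Y hX hY
  have hle_sup : ∀ i, √(Li i ^ 2 + Lmi i ^ 2) ≤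
      univ.sup' univ_nonempty fun i => √(Li i ^ 2 + Lmi i ^ 2) :=
    fun i ↦ le_sup' (fun i ↦ √(Li i ^ 2 + Lmi i ^ 2)) (mem_univ i)
  refine frobNorm_diagonal_sub_diagonal_le
    ((Real.sqrt_nonneg _).trans (hle_sup (0 : Fin n))) fun i ↦ ?_
  exact (abs_sub_le_sqrt_mul_of_lipschitz_coord_of_lipschitz_rest
    (hlipOwn i) (hlipOther i) (hX i) (hY i)).trans
    (mul_le_mul_of_nonneg_right (hle_sup i) (Real.sqrt_nonneg _))

/-- Lemma 1: if each `∇_i J_i` (given here as `g i`) is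
`L_i`-Lipschitz in its own variable `x_i ∈ Ω_i` and `L_{-i}`-Lipschitz in the
other players' variables `x_{-i}`, then the pseudo-gradient estimation
`F(X) = diag(∇_1 J_1(X_1), …, ∇_n J_n(X_n))` (with `X_i` the `i`-th row of `X`)
is Lipschitz on the augmented set `Ω_a = {X : diag(X) ∈ Ω}` in the Frobenius
norm, with constant `L = max_i √(L_i² + L_{-i}²)`. -/
theorem stmt_2 {n : ℕ} [NeZero n]
    (Ω : Fin n → Set ℝ) (hΩ : ∀ i, Convex ℝ (Ω i) ∧ IsClosed (Ω i))
    (g : Fin n → (Fin n → ℝ) → ℝ)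
    (Li Lmi : Fin n → ℝ) (hLi : ∀ i, 0 ≤ Li i) (hLmi : ∀ i, 0 ≤ Lmi i)
    (hlipOwn : ∀ i, ∀ x y : Fin n → ℝ, x i ∈ Ω i → y i ∈ Ω i →
      (∀ j, j ≠ i → x j = y j) → |g i x - g i y| ≤ Li i * |x i - y i|)
    (hlipOther : ∀ i, ∀ x y : Fin n → ℝ, x i ∈ Ω i → x i = y i →
      |g i x - g i y| ≤ Lmi i * Real.sqrt (∑ j ∈ Finset.univ.erase i, (x j - y j) ^ 2)) :
    ∀ X Y : Matrix (Fin n) (Fin n) ℝ,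
      (∀ i, X i i ∈ Ω i) → (∀ i, Y i i ∈ Ω i) →
      frobNorm (Matrix.diagonal (fun i => g i (X i)) -
          Matrix.diagonal (fun i => g i (Y i))) ≤
        (Finset.univ.sup' Finset.univ_nonempty fun i =>
            Real.sqrt (Li i ^ 2 + Lmi i ^ 2)) *
          frobNorm (X - Y) :=
  stmt_2_general Ω g Li Lmi hlipOwn hlipOther
end

section
/- Let F: ℝ^{n×n} → ℝ^{n×n} be L-Lipschitz (Frobenius norm), let X* ∈ ℝ^{n×n} be a consensus matrix (all rows equal to x* ∈ ℝⁿ) with ⟨F(X*), X − X*⟩ ≥ 0 for all X ∈ Ω_a, and suppose that for every consensus matrix X_∥ (all rows equal), ⟨F(X_∥) − F(X*), X_∥ − X*⟩ ≥ (μ/n)‖X_∥ − X*‖². Then for any X ∈ Ω_a, writing X = X_∥ + X_⊥ with X_∥ = (1/n)𝟏𝟏ᵀX, one has ⟨F(X), X − X*⟩ ≥ (μ/(2n))‖X_∥ − X*‖² − (L + 2nL²/μ)‖X_⊥‖². -/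
open Finset

/-- A matrix is a consensus matrix when all its rows are equal. -/
def IsConsensus {n : ℕ} (A : Matrix (Fin n) (Fin n) ℝ) : Prop :=
  ∃ y : Fin n → ℝ, ∀ i j, A i j = y j

lemma frobInner_self_nonneg {n : ℕ} (A : Matrix (Fin n) (Fin n) ℝ) :
    0 ≤ frobInner A A :=
  Finset.sum_nonneg fun _ _ => Finset.sum_nonneg fun _ _ => mul_self_nonneg _

lemma frobNorm_nonneg {n : ℕ} (A : Matrix (Fin n) (Fin n) ℝ) : 0 ≤ frobNorm A :=
  Real.sqrt_nonneg _

lemma frobNorm_sq {n : ℕ} (A : Matrix (Fin n) (Fin n) ℝ) :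
    frobNorm A ^ 2 = frobInner A A := Real.sq_sqrt (frobInner_self_nonneg A)

lemma frobInner_prod {n : ℕ} (A B : Matrix (Fin n) (Fin n) ℝ) :
    frobInner A B = ∑ p : Fin n × Fin n, A p.1 p.2 * B p.1 p.2 := by
  rw [frobInner]; exact (Fintype.sum_prod_type' (f := fun i j => A i j * B i j)).symm

lemma abs_frobInner_le {n : ℕ} (A B : Matrix (Fin n) (Fin n) ℝ) :
    |frobInner A B| ≤ frobNorm A * frobNorm B := by
  have h := Finset.sum_mul_sq_le_sq_mul_sq Finset.univ
    (fun p : Fin n × Fin n => A p.1 p.2) (fun p : Fin n × Fin n => B p.1 p.2)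
  have hA : frobInner A A = ∑ p : Fin n × Fin n, (A p.1 p.2) ^ 2 := by
    rw [frobInner_prod]; simp [sq]
  have hB : frobInner B B = ∑ p : Fin n × Fin n, (B p.1 p.2) ^ 2 := by
    rw [frobInner_prod]; simp [sq]
  have h2 : (frobInner A B) ^ 2 ≤ frobInner A A * frobInner B B := by
    rw [frobInner_prod, hA, hB]; exact h
  calc |frobInner A B| = Real.sqrt ((frobInner A B) ^ 2) :=
        (Real.sqrt_sq_eq_abs _).symm
    _ ≤ Real.sqrt (frobInner A A * frobInner B B) := Real.sqrt_le_sqrt h2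
    _ = frobNorm A * frobNorm B := by
        rw [Real.sqrt_mul (frobInner_self_nonneg A)]; rfl

lemma neg_frobInner_le {n : ℕ} (A B : Matrix (Fin n) (Fin n) ℝ) :
    -(frobNorm A * frobNorm B) ≤ frobInner A B :=
  (abs_le.mp (abs_frobInner_le A B)).1

lemma young_aux (c x y L : ℝ) (hc : 0 < c) :
    L * x * y ≤ c / 4 * x ^ 2 + L ^ 2 / c * y ^ 2 := by
  have key : L * x * y ≤ (c ^ 2 / 4 * x ^ 2 + L ^ 2 * y ^ 2) / c := by
    rw [le_div_iff₀ hc]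
    nlinarith [sq_nonneg (c * x / 2 - L * y)]
  calc L * x * y ≤ (c ^ 2 / 4 * x ^ 2 + L ^ 2 * y ^ 2) / c := key
    _ = c / 4 * x ^ 2 + L ^ 2 / c * y ^ 2 := by field_simp

/-- let `F` be `L`-Lipschitz (Frobenius norm), `X*` a consensus
matrix with rows `x*` satisfying `⟨F(X*), X - X*⟩ ≥ 0` for all `X ∈ Ω_a`, and
suppose `⟨F(X_∥) - F(X*), X_∥ - X*⟩ ≥ (μ/n)‖X_∥ - X*‖²` for every consensus
matrix `X_∥`.  Then for any `X ∈ Ω_a`, with `X = X_∥ + X_⊥`, `X_∥ = (1/n)𝟏𝟏ᵀX`: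
`⟨F(X), X - X*⟩ ≥ (μ/(2n))‖X_∥ - X*‖² - (L + 2nL²/μ)‖X_⊥‖²`. -/
theorem stmt_5 {n : ℕ} (hn : 0 < n)
    (F : Matrix (Fin n) (Fin n) ℝ → Matrix (Fin n) (Fin n) ℝ)
    (L : ℝ) (hL : 0 ≤ L)
    (hLip : ∀ A B, frobNorm (F A - F B) ≤ L * frobNorm (A - B))
    (μ : ℝ) (hμ : 0 < μ)
    (Ωa : Set (Matrix (Fin n) (Fin n) ℝ))
    (xstar : Fin n → ℝ) (Xstar : Matrix (Fin n) (Fin n) ℝ)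
    (hXstar : Xstar = fun _ j => xstar j)
    (hVI : ∀ X ∈ Ωa, (0 : ℝ) ≤ frobInner (F Xstar) (X - Xstar))
    (hRSM : ∀ Xpar : Matrix (Fin n) (Fin n) ℝ, IsConsensus Xpar →
      (μ / n) * frobNorm (Xpar - Xstar) ^ 2 ≤
        frobInner (F Xpar - F Xstar) (Xpar - Xstar)) :
    ∀ X ∈ Ωa, ∀ Xpar Xperp : Matrix (Fin n) (Fin n) ℝ,
      Xpar = (fun i j => (1 / (n : ℝ)) * ∑ k, X k j) → Xperp = X - Xpar →
      (μ / (2 * n)) * frobNorm (Xpar - Xstar) ^ 2 -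
          (L + 2 * n * L ^ 2 / μ) * frobNorm Xperp ^ 2 ≤
        frobInner (F X) (X - Xstar) := by
  intro X hX Xpar Xperp hXpar hXperp
  have hn' : (0 : ℝ) < n := by exact_mod_cast hn
  set a := frobNorm (Xpar - Xstar) with ha
  set b := frobNorm Xperp with hb
  have ha0 : 0 ≤ a := frobNorm_nonneg _
  have hb0 : 0 ≤ b := frobNorm_nonneg _
  -- consensus
  have hcons : IsConsensus Xpar :=
    ⟨fun j => (1 / (n : ℝ)) * ∑ k, X k j, fun i j => by rw [hXpar]⟩
  -- decomposition
  have hXs : X - Xstar = (Xpar - Xstar) + Xperp := by rw [hXperp]; abel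
  have key : frobInner (F X) (X - Xstar) =
      frobInner (F X - F Xpar) (Xpar - Xstar) + frobInner (F X - F Xpar) Xperp +
      frobInner (F Xpar - F Xstar) (Xpar - Xstar) +
      frobInner (F Xpar - F Xstar) Xperp +
      frobInner (F Xstar) (X - Xstar) := by
    rw [hXs]
    simp only [frobInner, Matrix.add_apply, Matrix.sub_apply,
      ← Finset.sum_add_distrib]
    refine Finset.sum_congr rfl fun i _ => ?_
    refine Finset.sum_congr rfl fun j _ => ?_
    ring
  -- Lipschitz bounds
  have hFXp : frobNorm (F X - F Xpar) ≤ L * b := by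
    have := hLip X Xpar
    rwa [show X - Xpar = Xperp from hXperp.symm] at this
  have hFpS : frobNorm (F Xpar - F Xstar) ≤ L * a := hLip Xpar Xstar
  -- the three cross terms
  have hA : -(L * b * a) ≤ frobInner (F X - F Xpar) (Xpar - Xstar) := by
    have h1 := neg_frobInner_le (F X - F Xpar) (Xpar - Xstar)
    have h2 : frobNorm (F X - F Xpar) * a ≤ L * b * a :=
      mul_le_mul_of_nonneg_right hFXp ha0
    linarith
  have hB : -(L * b * b) ≤ frobInner (F X - F Xpar) Xperp := by
    have h1 := neg_frobInner_le (F X - F Xpar) Xperp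
    have h2 : frobNorm (F X - F Xpar) * b ≤ L * b * b :=
      mul_le_mul_of_nonneg_right hFXp hb0
    linarith
  have hC : -(L * a * b) ≤ frobInner (F Xpar - F Xstar) Xperp := by
    have h1 := neg_frobInner_le (F Xpar - F Xstar) Xperp
    have h2 : frobNorm (F Xpar - F Xstar) * b ≤ L * a * b :=
      mul_le_mul_of_nonneg_right hFpS hb0
    linarith
  have hR : (μ / n) * a ^ 2 ≤ frobInner (F Xpar - F Xstar) (Xpar - Xstar) :=
    hRSM Xpar hcons
  have hV : (0 : ℝ) ≤ frobInner (F Xstar) (X - Xstar) := hVI X hX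
  -- Young's inequalities
  have hc : (0 : ℝ) < μ / n := div_pos hμ hn'
  have hy1 : L * a * b ≤ (μ / n) / 4 * a ^ 2 + L ^ 2 / (μ / n) * b ^ 2 :=
    young_aux (μ / n) a b L hc
  have hy2 : L * b * a ≤ (μ / n) / 4 * a ^ 2 + L ^ 2 / (μ / n) * b ^ 2 := by
    rw [mul_right_comm]; exact hy1
  -- arithmetic identities
  have e1 : μ / (2 * n) = (μ / n) / 2 := by rw [div_div, mul_comm]
  have e2 : 2 * n * L ^ 2 / μ = 2 * (L ^ 2 / (μ / n)) := by
    field_simp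
  rw [key, e1, e2]
  nlinarith [hA, hB, hC, hR, hV, hy1, hy2, sq_nonneg b, mul_nonneg hL (sq_nonneg b)]
end

section
/- Let L, μ > 0, n ≥ 1, and suppose α > 0 satisfies α ≤ μ/(4(Lμ + 2nL²)) and α ≤ √3/(4L). With η = (1 − √(1 − 4L²α²))/2, the quantity a₂ = (1 − η)/2 − (L + 2nL²/μ)α satisfies a₂ ≥ 1/8. -/
/-- under the step-size conditions `α ≤ μ/(4(Lμ + 2nL²))` and
`α ≤ √3/(4L)`, with `η = (1 - √(1 - 4L²α²))/2`, the coefficient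
`a₂ = (1 - η)/2 - (L + 2nL²/μ)α` satisfies `a₂ ≥ 1/8`. -/
theorem stmt_12 (L μ : ℝ) (hL : 0 < L) (hμ : 0 < μ) (n : ℕ) (hn : 1 ≤ n)
    (α : ℝ) (hα : 0 < α)
    (hα1 : α ≤ μ / (4 * (L * μ + 2 * n * L ^ 2)))
    (hα2 : α ≤ Real.sqrt 3 / (4 * L)) :
    let η := (1 - Real.sqrt (1 - 4 * L ^ 2 * α ^ 2)) / 2
    (1 : ℝ) / 8 ≤ (1 - η) / 2 - (L + 2 * n * L ^ 2 / μ) * α := by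
  intro η
  have hn' : (1 : ℝ) ≤ (n : ℝ) := by exact_mod_cast hn
  have hden : (0 : ℝ) < L * μ + 2 * n * L ^ 2 := by positivity
  have h1 : (L + 2 * n * L ^ 2 / μ) * α ≤ 1 / 4 := by
    have hαle : α * (4 * (L * μ + 2 * n * L ^ 2)) ≤ μ :=
      (le_div_iff₀ (by positivity)).mp hα1
    have heq : (L + 2 * n * L ^ 2 / μ) * α = α * (L * μ + 2 * n * L ^ 2) / μ := by
      field_simp
    rw [heq, div_le_iff₀ hμ]
    nlinarith
  have h4 : α * (4 * L) ≤ Real.sqrt 3 := (le_div_iff₀ (by positivity)).mp hα2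
  have h16 : 16 * L ^ 2 * α ^ 2 ≤ 3 := by
    nlinarith [mul_self_le_mul_self (by positivity : (0:ℝ) ≤ α * (4 * L)) h4,
      Real.mul_self_sqrt (by norm_num : (0:ℝ) ≤ 3)]
  have hsq : (1 : ℝ) / 2 ≤ Real.sqrt (1 - 4 * L ^ 2 * α ^ 2) := by
    rw [show (1:ℝ)/2 = Real.sqrt ((1:ℝ)/4) by
      rw [show (1:ℝ)/4 = (1/2)^2 by norm_num, Real.sqrt_sq (by norm_num)]]
    exact Real.sqrt_le_sqrt (by nlinarith)
  show (1 : ℝ) / 8 ≤ (1 - η) / 2 - (L + 2 * n * L ^ 2 / μ) * α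
  simp only [η]
  linarith
end

section
/- Let μ, L > 0, n ≥ 1, c ≥ 0 (playing the role of ‖I − W‖²), and suppose 0 < α < min{ n(1+c)/(2μ), μn(1+c)/(μ² + L²(1+c)²n²) }. Then with η = (1 − √(1 − 4L²α²))/2, one has η < μα/(n(1+c)). -/
/-!
Write `k = n(1+c)` and `t = μα/k`. The first bound on `α` gives `t < 1/2`, so
`η < t` is equivalent to `(1 - 2t)² < 1 - 4L²α²`, i.e. to `t² + L²α² < t`;
multiplied by `k²/α` this is exactly the second bound `α(μ² + L²k²) < μk`.
-/

lemma one_sub_sqrt_one_sub_four_mul_div_two_lt {t a : ℝ} (ht : t ≤ 1 / 2)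
    (h : t ^ 2 + a < t) : (1 - Real.sqrt (1 - 4 * a)) / 2 < t := by
  have hlt : 1 - 2 * t < Real.sqrt (1 - 4 * a) := by
    rw [Real.lt_sqrt (by linarith)]
    nlinarith
  linarith

lemma one_sub_sqrt_div_two_lt_div {μ L α k : ℝ} (hμ : 0 < μ) (hα : 0 < α)
    (hk : 2 * μ * α < k) (hα' : α * (μ ^ 2 + L ^ 2 * k ^ 2) < μ * k) :
    (1 - Real.sqrt (1 - 4 * L ^ 2 * α ^ 2)) / 2 < μ * α / k := by
  have hk0 : 0 < k := by nlinarith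
  rw [mul_assoc 4]
  apply one_sub_sqrt_one_sub_four_mul_div_two_lt
  · rw [div_le_iff₀ hk0]
    linarith
  · have hk2 : 0 < k ^ 2 := by positivity
    rw [← mul_lt_mul_iff_of_pos_right hk2, div_pow, add_mul, div_mul_cancel₀ _ hk2.ne',
      show μ * α / k * k ^ 2 = μ * α * k by field_simp]
    nlinarith

theorem stmt_14_general (μ L : ℝ) (hμ : 0 < μ) (n : ℕ)
    (c : ℝ) (α : ℝ) (hα : 0 < α)
    (hα' : α < min (n * (1 + c) / (2 * μ))
      (μ * n * (1 + c) / (μ ^ 2 + L ^ 2 * (1 + c) ^ 2 * n ^ 2))) :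
    (1 - Real.sqrt (1 - 4 * L ^ 2 * α ^ 2)) / 2 < μ * α / (n * (1 + c)) := by
  obtain ⟨h₁, h₂⟩ := lt_min_iff.mp hα'
  have hden : 0 < μ ^ 2 + L ^ 2 * (1 + c) ^ 2 * n ^ 2 := by positivity
  rw [lt_div_iff₀ (by positivity)] at h₁
  rw [lt_div_iff₀ hden] at h₂
  exact one_sub_sqrt_div_two_lt_div hμ hα (by linarith) (by linarith)

/-- for `μ, L > 0`, `n ≥ 1`, `c ≥ 0` (standing for `‖I - W‖²`), if
`0 < α < min{ n(1+c)/(2μ), μn(1+c)/(μ² + L²(1+c)²n²) }`, then with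
`η = (1 - √(1 - 4L²α²))/2` one has `η < μα/(n(1+c))`. -/
theorem stmt_14 (μ L : ℝ) (hμ : 0 < μ) (hL : 0 < L) (n : ℕ) (hn : 1 ≤ n)
    (c : ℝ) (hc : 0 ≤ c) (α : ℝ) (hα : 0 < α)
    (hα' : α < min (n * (1 + c) / (2 * μ))
      (μ * n * (1 + c) / (μ ^ 2 + L ^ 2 * (1 + c) ^ 2 * n ^ 2))) :
    (1 - Real.sqrt (1 - 4 * L ^ 2 * α ^ 2)) / 2 < μ * α / (n * (1 + c)) :=
  stmt_14_general μ L hμ n c α hα hα'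
end

section
/- Let μ, L > 0, n ≥ 1, σ ∈ (0,1), c ≥ 0 (playing the role of ‖I − W‖²), η ∈ (0, 1/2), and suppose α ≤ nμ(1 − σ²)/(4(μ + 2nL)²(1 + c)). Define a₁ = (1−η)/2 + (μ/(2n))α, a₂ = (1−η)/2 − (L + 2nL²/μ)α, b₁ = (1 + ηc)/2, b₂ = ((1−η)σ² + η(1 + c))/2. Then a₁/b₁ ≤ a₂/b₂. -/
/-!
Cross-multiplying, `a₁ b₂ ≤ a₂ b₁` reads `α (A b₂ + B b₁) ≤ (1 - η)/2 · (b₁ - b₂)`, where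
`A = μ/(2n)` and `B = L + 2nL²/μ`. The gap `b₁ - b₂ = (1 - η)(1 - σ²)/2` is at least `(1 - σ²)/8`
because `η < 1/2`, while `b₁, b₂ ≤ (1 + c)/2` and `A + B ≤ (μ + 2nL)²/(2nμ)`, so the step-size
bound makes the left side at most `(1 - σ²)/8` as well.
-/

theorem add_mul_div_le_sub_mul_div_of_mul_le {p A B α b₁ b₂ : ℝ} (hb₁ : 0 < b₁) (hb₂ : 0 < b₂)
    (h : α * (A * b₂ + B * b₁) ≤ p * (b₁ - b₂)) :
    (p + A * α) / b₁ ≤ (p - B * α) / b₂ := by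
  rw [div_le_div_iff₀ hb₁ hb₂]
  linarith

theorem div_add_add_le_sq_div {μ L n : ℝ} (hμ : 0 < μ) (hL : 0 ≤ L) (hn : 0 < n) :
    μ / (2 * n) + (L + 2 * n * L ^ 2 / μ) ≤ (μ + 2 * n * L) ^ 2 / (2 * n * μ) := by
  have hnL : 0 ≤ n * L * μ := by positivity
  rw [le_div_iff₀ (by positivity)]
  field_simp
  nlinarith

theorem mul_add_add_mul_le_of_le_div {μ L n c r α : ℝ} (hμ : 0 < μ) (hL : 0 ≤ L) (hn : 0 < n)
    (hc : 0 ≤ c) (hα : 0 ≤ α)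
    (hαr : α ≤ n * μ * r / (4 * (μ + 2 * n * L) ^ 2 * (1 + c))) :
    α * (μ / (2 * n) + (L + 2 * n * L ^ 2 / μ)) * (1 + c) ≤ r / 8 := by
  have hden : 0 < 4 * (μ + 2 * n * L) ^ 2 * (1 + c) := by positivity
  calc α * (μ / (2 * n) + (L + 2 * n * L ^ 2 / μ)) * (1 + c)
      ≤ α * ((μ + 2 * n * L) ^ 2 / (2 * n * μ)) * (1 + c) := by
        gcongr
        exact div_add_add_le_sq_div hμ hL hn
    _ = α * (4 * (μ + 2 * n * L) ^ 2 * (1 + c)) / (8 * (n * μ)) := by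
        field_simp
        ring
    _ ≤ n * μ * r / (8 * (n * μ)) := by
        gcongr ?_ / _
        exact (le_div_iff₀ hden).mp hαr
    _ = r / 8 := by
        field_simp

theorem stmt_15_general (μ L : ℝ) (hμ : 0 < μ) (hL : 0 < L) (n : ℕ) (hn : 1 ≤ n)
    (σ : ℝ) (hσ : σ ∈ Set.Ioo (0 : ℝ) 1) (c : ℝ) (hc : 0 ≤ c)
    (η : ℝ) (hη : η ∈ Set.Ioo (0 : ℝ) (1 / 2)) (α : ℝ) (hα : 0 < α)
    (hαbound : α ≤ n * μ * (1 - σ ^ 2) / (4 * (μ + 2 * n * L) ^ 2 * (1 + c)))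
    (a₁ a₂ b₁ b₂ : ℝ)
    (ha₁ : a₁ = (1 - η) / 2 + (μ / (2 * n)) * α)
    (ha₂ : a₂ = (1 - η) / 2 - (L + 2 * n * L ^ 2 / μ) * α)
    (hb₁ : b₁ = (1 + η * c) / 2)
    (hb₂ : b₂ = ((1 - η) * σ ^ 2 + η * (1 + c)) / 2) :
    a₁ / b₁ ≤ a₂ / b₂ := by
  obtain ⟨hσ₀, hσ₁⟩ := hσ
  obtain ⟨hη₀, hη₁⟩ := hη
  have hn₀ : (0 : ℝ) < n := by exact_mod_cast hn
  have hσsq : σ ^ 2 < 1 := by nlinarith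
  have hgap : b₁ - b₂ = (1 - η) * (1 - σ ^ 2) / 2 := by rw [hb₁, hb₂]; ring
  have hb₂pos : 0 < b₂ := by rw [hb₂]; nlinarith
  have hb₁b₂ : b₂ ≤ b₁ := by nlinarith
  have hb₁c : b₁ ≤ (1 + c) / 2 := by rw [hb₁]; nlinarith
  have hstep := mul_add_add_mul_le_of_le_div hμ hL.le hn₀ hc hα.le hαbound
  have hA : 0 ≤ μ / (2 * n) := by positivity
  have hB : 0 ≤ L + 2 * n * L ^ 2 / μ := by positivity
  rw [ha₁, ha₂]
  refine add_mul_div_le_sub_mul_div_of_mul_le (by linarith) hb₂pos ?_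
  calc α * (μ / (2 * n) * b₂ + (L + 2 * n * L ^ 2 / μ) * b₁)
      ≤ α * (μ / (2 * n) * ((1 + c) / 2) + (L + 2 * n * L ^ 2 / μ) * ((1 + c) / 2)) := by
        gcongr
        linarith
    _ = α * (μ / (2 * n) + (L + 2 * n * L ^ 2 / μ)) * (1 + c) / 2 := by ring
    _ ≤ (1 - σ ^ 2) / 16 := by linarith
    _ ≤ (1 - η) / 2 * (b₁ - b₂) := by rw [hgap]; nlinarith

/-- with the coefficients of Proposition 1
(`a₁ = (1-η)/2 + (μ/(2n))α`, `a₂ = (1-η)/2 - (L + 2nL²/μ)α`,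
`b₁ = (1 + ηc)/2`, `b₂ = ((1-η)σ² + η(1+c))/2`, where `c` stands for
`‖I - W‖²`), if `α ≤ nμ(1-σ²)/(4(μ+2nL)²(1+c))` then `a₁/b₁ ≤ a₂/b₂`. -/
theorem stmt_15 (μ L : ℝ) (hμ : 0 < μ) (hL : 0 < L) (n : ℕ) (hn : 1 ≤ n)
    (σ : ℝ) (hσ : σ ∈ Set.Ioo (0 : ℝ) 1) (c : ℝ) (hc : 0 ≤ c)
    (η : ℝ) (hη : η ∈ Set.Ioo (0 : ℝ) (1 / 2)) (α : ℝ) (hα : 0 < α)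
    (hαbound : α ≤ n * μ * (1 - σ ^ 2) / (4 * (μ + 2 * n * L) ^ 2 * (1 + c)))
    (a₁ a₂ b₁ b₂ : ℝ)
    (ha₁ : a₁ = (1 - η) / 2 + (μ / (2 * n)) * α)
    (ha₂ : a₂ = (1 - η) / 2 - (L + 2 * n * L ^ 2 / μ) * α)
    (hb₁ : b₁ = (1 + η * c) / 2)
    (hb₂ : b₂ = ((1 - η) * σ ^ 2 + η * (1 + c)) / 2)
    (ha₂pos : 0 < a₂) (hb₂pos : 0 < b₂) :
    a₁ / b₁ ≤ a₂ / b₂ :=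
  stmt_15_general μ L hμ hL n hn σ hσ c hc η hη α hα hαbound a₁ a₂ b₁ b₂ ha₁ ha₂ hb₁ hb₂
end
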